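/- Under the projection ρ, the action of R corresponds to clockwise rotation by 90 degrees: for every (x,y,z) ∈ ℝ³ with x − y + z ≠ 0, one has φ(R·(x,y,z)) = −(x − y + z) ≠ 0, and ρ(R·(x,y,z)) = (b, −a), where (a,b) = ρ(x,y,z). -/

import Mathlib

open Matrix

/-- The matrix `R`. -/
def R : Matrix (Fin 3) (Fin 3) ℝ := !![0,0,-1; 1,0,-1; 0,1,-1]

/-- The linear functional `φ(x,y,z) = x − y + z`. -/
def phi (p : Fin 3 → ℝ) : ℝ := p 0 - p 1 + p 2

/-- The projection `ρ(x,y,z) = (−2(x−z)/(x−y+z), −2y/(x−y+z))`. -/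
noncomputable def rho (p : Fin 3 → ℝ) : ℝ × ℝ :=
  (-2 * (p 0 - p 2) / phi p, -2 * p 1 / phi p)

/-- Under the projection `ρ`, the action of `R` is clockwise rotation by 90
degrees: `φ(R·(x,y,z)) = −(x−y+z) ≠ 0` and `ρ(R·(x,y,z)) = (b, −a)` where
`(a,b) = ρ(x,y,z)`. -/
theorem rho_R (x y z : ℝ) (h : x - y + z ≠ 0) :
    phi (R.mulVec ![x, y, z]) = -(x - y + z) ∧
    phi (R.mulVec ![x, y, z]) ≠ 0 ∧
    rho (R.mulVec ![x, y, z]) = ((rho ![x, y, z]).2, -(rho ![x, y, z]).1) := by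
  have e : R.mulVec ![x, y, z] = ![-z, x - z, y - z] := by
    funext i
    fin_cases i <;>
      simp [R, mulVec, dotProduct, Fin.sum_univ_three] <;> ring
  rw [e]
  have h1 : phi ![-z, x - z, y - z] = -(x - y + z) := by
    simp [phi]; ring
  refine ⟨h1, by rw [h1]; exact neg_ne_zero.mpr h, ?_⟩
  simp only [rho, h1, Prod.mk.injEq]
  have h2 : -z - (x - z) + (y - z) ≠ 0 := by
    intro hc; apply h; linarith
  have h3 : -z + (y - x) ≠ 0 := by intro hc; apply h; linarith
  have h4 : -x - z + y ≠ 0 := by intro hc; apply h; linarith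
  constructor <;> (simp only [phi, Matrix.cons_val_zero, Matrix.cons_val_one,
      Matrix.head_cons, Matrix.cons_val_two, Matrix.tail_cons]; field_simp [h3, h4] <;> ring)
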